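/- For all cocycles f ∈ C^{p−1}, g ∈ C^{q−1}, h ∈ C^{s−1} (df = 0, dg = 0, dh = 0), the higher-form symmetry shift operators S^r_f : ψ(λ,μ,ν) ↦ ψ(λ+f, μ, ν), S^b_g : ψ(λ,μ,ν) ↦ ψ(λ, μ+g, ν) and S^g_h : ψ(λ,μ,ν) ↦ ψ(λ, μ, ν+h) commute with the entangler U and with every dressed SPT stabilizer U ∘ X^r_σ ∘ U, U ∘ X^b_ξ ∘ U, U ∘ X^g_ζ ∘ U. Hence the SPT Hamiltonian H_SPT is invariant under the ℤ₂^{(p−1)} × ℤ₂^{(q−1)} × ℤ₂^{(s−1)} higher-form symmetries generated by products of single-site X operators over cocycles (Eq. (globalsym) of Appendix A). -/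

import Mathlib

noncomputable section

open scoped BigOperators

/-- Transport a cochain along an equality of degrees. -/
def cellCast {cells : ℕ → Type} {i j : ℕ} (h : i = j) (x : cells i → ZMod 2) :
    cells j → ZMod 2 :=
  fun σ => x (cast (congrArg cells h.symm) σ)

/-- A *cochain system* of dimension `N` over `𝔽₂ = ZMod 2`: finite sets of cells in
each degree, `𝔽₂`-linear coboundary maps `d` with `d ∘ d = 0`, `𝔽₂`-bilinear associative
cup products satisfying the Leibniz rule, and an `𝔽₂`-linear integral on top-degree
cochains satisfying the Stokes identity.  (These are the structures carried by the `𝔽₂`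
cellular cochains of a closed Poincaré CW complex.) -/
structure CochainSystem (N : ℕ) where
  cells : ℕ → Type
  fintypeCells : ∀ i, Fintype (cells i)
  decEqCells : ∀ i, DecidableEq (cells i)
  d : ∀ i, (cells i → ZMod 2) →ₗ[ZMod 2] (cells (i + 1) → ZMod 2)
  cup : ∀ i j, (cells i → ZMod 2) →ₗ[ZMod 2]
    ((cells j → ZMod 2) →ₗ[ZMod 2] (cells (i + j) → ZMod 2))
  integ : (cells N → ZMod 2) →ₗ[ZMod 2] ZMod 2
  d_comp_d : ∀ (i : ℕ) (x : cells i → ZMod 2), d (i + 1) (d i x) = 0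
  cup_assoc : ∀ {i j k : ℕ} (u : cells i → ZMod 2) (v : cells j → ZMod 2)
    (w : cells k → ZMod 2),
    cup (i + j) k (cup i j u v) w
      = cellCast (Nat.add_assoc i j k).symm (cup i (j + k) u (cup j k v w))
  leibniz : ∀ {i j : ℕ} (u : cells i → ZMod 2) (v : cells j → ZMod 2),
    d (i + j) (cup i j u v)
      = cellCast (by omega : i + 1 + j = i + j + 1) (cup (i + 1) j (d i u) v)
        + cellCast (by omega : i + (j + 1) = i + j + 1) (cup i (j + 1) u (d j v))
  stokes : ∀ (k : ℕ) (hk : k + 1 = N) (w : cells k → ZMod 2),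
    integ (cellCast hk (d k w)) = 0

attribute [instance] CochainSystem.fintypeCells CochainSystem.decEqCells

namespace CochainSystem

variable {N : ℕ}

/-- The degree-`i` cochain space `Cⁱ`. -/
abbrev C (S : CochainSystem N) (i : ℕ) : Type := S.cells i → ZMod 2

/-- The indicator cochain `σ̃` of a cell `σ`. -/
def indicator (S : CochainSystem N) {i : ℕ} (σ : S.cells i) : S.C i :=
  fun τ => if τ = σ then 1 else 0

/-- `∫ (u ∪ v) ∪ w` when the degrees add up to `N`. -/
def integ3 (S : CochainSystem N) {i j k : ℕ} (h : i + j + k = N)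
    (u : S.C i) (v : S.C j) (w : S.C k) : ZMod 2 :=
  S.integ (cellCast h (S.cup (i + j) k (S.cup i j u v) w))

end CochainSystem

/-- The sign `(-1)ᵗ ∈ ℂ` of `t ∈ 𝔽₂`. -/
def sgn (t : ZMod 2) : ℂ := (-1 : ℂ) ^ t.val

open CochainSystem

section SPT

variable {N p q s : ℕ}

/-- A configuration of the three colours of `ℤ₂` matter fields. -/
abbrev SConfig (S : CochainSystem N) (p q s : ℕ) : Type :=
  S.C p × S.C q × S.C s

/-- The three-colour matter space `W = ((C^{p−1} × C^{q−1} × C^{s−1}) → ℂ)`. -/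
abbrev SSpace (S : CochainSystem N) (p q s : ℕ) : Type := SConfig S p q s → ℂ

/-- The CCZ entangler `U`: `(U ψ)(λ,μ,ν) = (−1)^{∫ λ ∪ dμ ∪ dν} ψ(λ,μ,ν)`. -/
def entangler (S : CochainSystem N) (h : p + 1 + (q + 1) + (s + 1) = N + 1) :
    SSpace S p q s → SSpace S p q s :=
  fun ψ x =>
    sgn (S.integ3 (show p + (q + 1) + (s + 1) = N by omega)
      x.1 (S.d q x.2.1) (S.d s x.2.2)) * ψ x

/-- The single-site flip operator `X^r_σ`: `(X^r_σ ψ)(λ,μ,ν) = ψ(λ + σ̃, μ, ν)`. -/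
def flipR (S : CochainSystem N) (p q s : ℕ) (σ : S.cells p) :
    SSpace S p q s → SSpace S p q s :=
  fun ψ x => ψ (x.1 + S.indicator σ, x.2.1, x.2.2)

/-- The single-site flip operator `X^b_ξ`. -/
def flipB (S : CochainSystem N) (p q s : ℕ) (ξ : S.cells q) :
    SSpace S p q s → SSpace S p q s :=
  fun ψ x => ψ (x.1, x.2.1 + S.indicator ξ, x.2.2)

/-- The single-site flip operator `X^g_ζ`. -/
def flipG (S : CochainSystem N) (p q s : ℕ) (ζ : S.cells s) :
    SSpace S p q s → SSpace S p q s :=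
  fun ψ x => ψ (x.1, x.2.1, x.2.2 + S.indicator ζ)

/-- The dressed red SPT (higher-form cluster) stabilizer. -/
def dressedR (S : CochainSystem N) (h : p + 1 + (q + 1) + (s + 1) = N + 1)
    (σ : S.cells p) : SSpace S p q s → SSpace S p q s :=
  fun ψ x =>
    sgn (S.integ3 (show p + (q + 1) + (s + 1) = N by omega)
        (S.indicator σ) (S.d q x.2.1) (S.d s x.2.2))
      * ψ (x.1 + S.indicator σ, x.2.1, x.2.2)

/-- The dressed blue SPT stabilizer. -/
def dressedB (S : CochainSystem N) (h : p + 1 + (q + 1) + (s + 1) = N + 1)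
    (ξ : S.cells q) : SSpace S p q s → SSpace S p q s :=
  fun ψ x =>
    sgn (S.integ3 (show p + (q + 1) + (s + 1) = N by omega)
        x.1 (S.d q (S.indicator ξ)) (S.d s x.2.2))
      * ψ (x.1, x.2.1 + S.indicator ξ, x.2.2)

/-- The dressed green SPT stabilizer. -/
def dressedG (S : CochainSystem N) (h : p + 1 + (q + 1) + (s + 1) = N + 1)
    (ζ : S.cells s) : SSpace S p q s → SSpace S p q s :=
  fun ψ x =>
    sgn (S.integ3 (show p + (q + 1) + (s + 1) = N by omega)
        x.1 (S.d q x.2.1) (S.d s (S.indicator ζ)))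
      * ψ (x.1, x.2.1, x.2.2 + S.indicator ζ)

/-- The trivial paramagnet Hamiltonian `H⁰`: minus the sum of all single-site flips. -/
def H0 (S : CochainSystem N) (p q s : ℕ) : SSpace S p q s → SSpace S p q s :=
  -((∑ σ : S.cells p, flipR S p q s σ) + (∑ ξ : S.cells q, flipB S p q s ξ)
    + (∑ ζ : S.cells s, flipG S p q s ζ))

/-- The higher-form SPT Hamiltonian: minus the sum of all dressed stabilizers. -/
def HSPT (S : CochainSystem N) (h : p + 1 + (q + 1) + (s + 1) = N + 1) :
    SSpace S p q s → SSpace S p q s :=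
  -((∑ σ : S.cells p, dressedR S h σ) + (∑ ξ : S.cells q, dressedB S h ξ)
    + (∑ ζ : S.cells s, dressedG S h ζ))

end SPT

/-- The higher-form symmetry shift operator `S^r_f : ψ(λ,μ,ν) ↦ ψ(λ+f, μ, ν)`. -/
def shiftR {N : ℕ} (S : CochainSystem N) (p q s : ℕ) (f : S.C p) :
    SSpace S p q s → SSpace S p q s :=
  fun ψ x => ψ (x.1 + f, x.2.1, x.2.2)

/-- The higher-form symmetry shift operator `S^b_g : ψ(λ,μ,ν) ↦ ψ(λ, μ+g, ν)`. -/
def shiftB {N : ℕ} (S : CochainSystem N) (p q s : ℕ) (g : S.C q) :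
    SSpace S p q s → SSpace S p q s :=
  fun ψ x => ψ (x.1, x.2.1 + g, x.2.2)

/-- The higher-form symmetry shift operator `S^g_h : ψ(λ,μ,ν) ↦ ψ(λ, μ, ν+h)`. -/
def shiftG {N : ℕ} (S : CochainSystem N) (p q s : ℕ) (e : S.C s) :
    SSpace S p q s → SSpace S p q s :=
  fun ψ x => ψ (x.1, x.2.1, x.2.2 + e)


/-!
All operators involved are built from the diagonal entangler `U` and translations of the
configuration space: the flips `X_σ` and the shifts are translations, the dressed stabilizers are
`U ∘ X_σ ∘ U` (the two phases `(−1)^{∫ λ ∪ dμ ∪ dν}` combine by trilinearity), and `H_SPT` is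
minus a sum of those. Translations commute with each other, so everything reduces to `U`
commuting with translation by a triple `(f, g, e)` of cocycles, i.e. to invariance of the phase.
As `dg = de = 0`, only the term `∫ f ∪ dμ ∪ dν` remains; since `f` and `dν` are closed, Leibniz
gives `f ∪ dμ ∪ dν = d(f ∪ μ ∪ dν)`, whose integral vanishes by Stokes.
-/

open scoped translate

@[simp]
lemma cellCast_rfl {cells : ℕ → Type} {i : ℕ} (h : i = i) (x : cells i → ZMod 2) :
    cellCast h x = x := rfl

@[simp]
lemma cellCast_cellCast {cells : ℕ → Type} {i j k : ℕ} (h₁ : i = j) (h₂ : j = k)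
    (x : cells i → ZMod 2) : cellCast h₂ (cellCast h₁ x) = cellCast (h₁.trans h₂) x := by
  subst h₁ h₂; rfl

@[simp]
lemma cellCast_zero {cells : ℕ → Type} {i j : ℕ} (h : i = j) :
    cellCast h (0 : cells i → ZMod 2) = 0 := rfl

lemma cellCast_add {cells : ℕ → Type} {i j : ℕ} (h : i = j) (x y : cells i → ZMod 2) :
    cellCast h (x + y) = cellCast h x + cellCast h y := rfl

lemma cellCast_sub {cells : ℕ → Type} {i j : ℕ} (h : i = j) (x y : cells i → ZMod 2) :
    cellCast h (x - y) = cellCast h x - cellCast h y := rfl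

namespace CochainSystem

variable {N : ℕ} (S : CochainSystem N)

lemma cup_cellCast_right {i j k : ℕ} (h : k = j) (u : S.C i) (v : S.C k) :
    S.cup i j u (cellCast h v) = cellCast (by rw [h]) (S.cup i k u v) := by
  subst h; rfl

lemma integ3_add_left {i j k : ℕ} (h : i + j + k = N) (u u' : S.C i) (v : S.C j)
    (w : S.C k) : S.integ3 h (u + u') v w = S.integ3 h u v w + S.integ3 h u' v w := by
  simp only [integ3, map_add, LinearMap.add_apply, cellCast_add]

lemma integ3_sub_left {i j k : ℕ} (h : i + j + k = N) (u u' : S.C i) (v : S.C j)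
    (w : S.C k) : S.integ3 h (u - u') v w = S.integ3 h u v w - S.integ3 h u' v w := by
  simp only [integ3, map_sub, LinearMap.sub_apply, cellCast_sub]

lemma integ3_add_mid {i j k : ℕ} (h : i + j + k = N) (u : S.C i) (v v' : S.C j)
    (w : S.C k) : S.integ3 h u (v + v') w = S.integ3 h u v w + S.integ3 h u v' w := by
  simp only [integ3, map_add, LinearMap.add_apply, cellCast_add]

lemma integ3_add_right {i j k : ℕ} (h : i + j + k = N) (u : S.C i) (v : S.C j)
    (w w' : S.C k) : S.integ3 h u v (w + w') = S.integ3 h u v w + S.integ3 h u v w' := by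
  simp only [integ3, map_add, cellCast_add]

lemma cup_d_right_of_closed {i j : ℕ} {u : S.C i} (hu : S.d i u = 0) (v : S.C j) :
    S.cup i (j + 1) u (S.d j v) = cellCast (by omega) (S.d (i + j) (S.cup i j u v)) := by
  simp [S.leibniz u v, hu]

lemma cup_d_left_of_closed {i j : ℕ} (u : S.C i) {v : S.C j} (hv : S.d j v = 0) :
    S.cup (i + 1) j (S.d i u) v = cellCast (by omega) (S.d (i + j) (S.cup i j u v)) := by
  simp [S.leibniz u v, hv]

lemma integ3_d_mid_of_closed {i j k : ℕ} (h : i + (j + 1) + k = N) {u : S.C i}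
    (hu : S.d i u = 0) (v : S.C j) {w : S.C k} (hw : S.d k w = 0) :
    S.integ3 h u (S.d j v) w = 0 := by
  rw [integ3, S.cup_assoc, S.cup_d_left_of_closed v hw, cup_cellCast_right,
    S.cup_d_right_of_closed hu, cellCast_cellCast, cellCast_cellCast]
  exact S.stokes _ _ _

end CochainSystem

lemma sgn_add (t u : ZMod 2) : sgn (t + u) = sgn t * sgn u := by
  rw [sgn, sgn, sgn, ZMod.val_add, ← neg_one_pow_eq_pow_mod_two, pow_add]

lemma sgn_mul_sgn_add (t u : ZMod 2) : sgn t * sgn (t + u) = sgn u := by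
  rw [sgn_add, ← mul_assoc, ← sgn_add, CharTwo.add_self_eq_zero, sgn, ZMod.val_zero, pow_zero,
    one_mul]

lemma commute_translate_translate {G α : Type*} [AddCommGroup G] (a b : G) :
    Function.Commute (τ a : (G → α) → G → α) (τ b) :=
  translate_comm a b

lemma Function.Commute.translate_sum {G M ι : Type*} [AddCommGroup G] [AddCommMonoid M]
    {a : G} {s : Finset ι} {A : ι → (G → M) → G → M}
    (hA : ∀ i ∈ s, Function.Commute (τ a) (A i)) :
    Function.Commute (τ a) (∑ i ∈ s, A i) := fun ψ => by
  simp only [Finset.sum_apply, translate_sum_right]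
  exact Finset.sum_congr rfl fun i hi => hA i hi ψ

lemma Function.Commute.translate_add {G M : Type*} [AddCommGroup G] [AddCommMonoid M]
    {a : G} {A B : (G → M) → G → M} (hA : Function.Commute (τ a) A)
    (hB : Function.Commute (τ a) B) : Function.Commute (τ a) (A + B) := fun ψ => by
  simp only [Pi.add_apply, translate_add_right, hA ψ, hB ψ]

lemma Function.Commute.translate_neg {G M : Type*} [AddCommGroup G] [AddCommGroup M]
    {a : G} {A : (G → M) → G → M} (hA : Function.Commute (τ a) A) :
    Function.Commute (τ a) (-A) := fun ψ => by
  simp only [Pi.neg_apply, translate_neg_right, hA ψ]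

section SPT

variable {N p q s : ℕ} (S : CochainSystem N)

lemma shiftR_eq_translate (f : S.C p) : shiftR S p q s f = τ (f, 0, 0) := by
  funext ψ x
  rw [translate_apply, shiftR]
  congr 1
  ext <;> simp [CharTwo.sub_eq_add]

lemma shiftB_eq_translate (g : S.C q) : shiftB S p q s g = τ (0, g, 0) := by
  funext ψ x
  rw [translate_apply, shiftB]
  congr 1
  ext <;> simp [CharTwo.sub_eq_add]

lemma shiftG_eq_translate (e : S.C s) : shiftG S p q s e = τ (0, 0, e) := by
  funext ψ x
  rw [translate_apply, shiftG]
  congr 1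
  ext <;> simp [CharTwo.sub_eq_add]

lemma flipR_eq_shiftR (σ : S.cells p) : flipR S p q s σ = shiftR S p q s (S.indicator σ) := rfl

lemma flipB_eq_shiftB (ξ : S.cells q) : flipB S p q s ξ = shiftB S p q s (S.indicator ξ) := rfl

lemma flipG_eq_shiftG (ζ : S.cells s) : flipG S p q s ζ = shiftG S p q s (S.indicator ζ) := rfl

variable (h : p + 1 + (q + 1) + (s + 1) = N + 1)

lemma entangler_comp_flipR_comp_entangler (σ : S.cells p) :
    entangler S h ∘ flipR S p q s σ ∘ entangler S h = dressedR S h σ := by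
  funext ψ x
  simp only [Function.comp_apply, entangler, flipR, dressedR]
  rw [S.integ3_add_left, ← mul_assoc, sgn_mul_sgn_add]

lemma entangler_comp_flipB_comp_entangler (ξ : S.cells q) :
    entangler S h ∘ flipB S p q s ξ ∘ entangler S h = dressedB S h ξ := by
  funext ψ x
  simp only [Function.comp_apply, entangler, flipB, dressedB]
  rw [map_add, S.integ3_add_mid, ← mul_assoc, sgn_mul_sgn_add]

lemma entangler_comp_flipG_comp_entangler (ζ : S.cells s) :
    entangler S h ∘ flipG S p q s ζ ∘ entangler S h = dressedG S h ζ := by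
  funext ψ x
  simp only [Function.comp_apply, entangler, flipG, dressedG]
  rw [map_add, S.integ3_add_right, ← mul_assoc, sgn_mul_sgn_add]

lemma HSPT_eq_neg_sum : HSPT S h =
    -((∑ σ : S.cells p, entangler S h ∘ τ (S.indicator σ, 0, 0) ∘ entangler S h)
      + (∑ ξ : S.cells q, entangler S h ∘ τ (0, S.indicator ξ, 0) ∘ entangler S h)
      + (∑ ζ : S.cells s, entangler S h ∘ τ (0, 0, S.indicator ζ) ∘ entangler S h)) := by
  simp only [HSPT, ← entangler_comp_flipR_comp_entangler, ← entangler_comp_flipB_comp_entangler,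
    ← entangler_comp_flipG_comp_entangler, flipR_eq_shiftR, flipB_eq_shiftB, flipG_eq_shiftG,
    shiftR_eq_translate, shiftB_eq_translate, shiftG_eq_translate]

variable {S h}

lemma commute_translate_entangler {f : S.C p} {g : S.C q} {e : S.C s}
    (hf : S.d p f = 0) (hg : S.d q g = 0) (he : S.d s e = 0) :
    Function.Commute (τ (f, g, e)) (entangler S h) := fun ψ => by
  funext x
  simp only [translate_apply, entangler, Prod.fst_sub, Prod.snd_sub, map_sub, hg, he, sub_zero,
    S.integ3_sub_left, S.integ3_d_mid_of_closed _ hf _ (S.d_comp_d s _)]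

lemma Function.Commute.conj_translate {c : SConfig S p q s}
    (hc : Function.Commute (τ c) (entangler S h)) (c' : SConfig S p q s) :
    Function.Commute (τ c) (entangler S h ∘ τ c' ∘ entangler S h) :=
  hc.comp_right ((commute_translate_translate c c').comp_right hc)

lemma Function.Commute.translate_HSPT {c : SConfig S p q s}
    (hc : Function.Commute (τ c) (entangler S h)) : Function.Commute (τ c) (HSPT S h) := by
  rw [HSPT_eq_neg_sum]
  refine Function.Commute.translate_neg (.translate_add (.translate_add ?_ ?_) ?_) <;>
    exact .translate_sum fun _ _ => hc.conj_translate _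

end SPT

/-- **Higher-form symmetries of the SPT Hamiltonian (Eq. (globalsym), Appendix A).**
For cocycles `f ∈ C^{p−1}`, `g ∈ C^{q−1}`, `e ∈ C^{s−1}`, the shift operators
`S^r_f`, `S^b_g`, `S^g_e` commute with the entangler `U` and with every dressed SPT
stabilizer `U ∘ X^r_σ ∘ U`, `U ∘ X^b_ξ ∘ U`, `U ∘ X^g_ζ ∘ U`; hence the SPT
Hamiltonian `H_SPT` is invariant under the `ℤ₂^{(p−1)} × ℤ₂^{(q−1)} × ℤ₂^{(s−1)}`
higher-form symmetries. -/
theorem spt_higher_form_symmetry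
    {N p q s : ℕ} (S : CochainSystem N) (h : p + 1 + (q + 1) + (s + 1) = N + 1)
    (f : S.C p) (hf : S.d p f = 0)
    (g : S.C q) (hg : S.d q g = 0)
    (e : S.C s) (he : S.d s e = 0) :
    (shiftR S p q s f ∘ entangler S h = entangler S h ∘ shiftR S p q s f) ∧
    (shiftB S p q s g ∘ entangler S h = entangler S h ∘ shiftB S p q s g) ∧
    (shiftG S p q s e ∘ entangler S h = entangler S h ∘ shiftG S p q s e) ∧
    (∀ σ : S.cells p,
      shiftR S p q s f ∘ (entangler S h ∘ flipR S p q s σ ∘ entangler S h)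
        = (entangler S h ∘ flipR S p q s σ ∘ entangler S h) ∘ shiftR S p q s f) ∧
    (∀ ξ : S.cells q,
      shiftR S p q s f ∘ (entangler S h ∘ flipB S p q s ξ ∘ entangler S h)
        = (entangler S h ∘ flipB S p q s ξ ∘ entangler S h) ∘ shiftR S p q s f) ∧
    (∀ ζ : S.cells s,
      shiftR S p q s f ∘ (entangler S h ∘ flipG S p q s ζ ∘ entangler S h)
        = (entangler S h ∘ flipG S p q s ζ ∘ entangler S h) ∘ shiftR S p q s f) ∧
    (∀ σ : S.cells p,
      shiftB S p q s g ∘ (entangler S h ∘ flipR S p q s σ ∘ entangler S h)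
        = (entangler S h ∘ flipR S p q s σ ∘ entangler S h) ∘ shiftB S p q s g) ∧
    (∀ ξ : S.cells q,
      shiftB S p q s g ∘ (entangler S h ∘ flipB S p q s ξ ∘ entangler S h)
        = (entangler S h ∘ flipB S p q s ξ ∘ entangler S h) ∘ shiftB S p q s g) ∧
    (∀ ζ : S.cells s,
      shiftB S p q s g ∘ (entangler S h ∘ flipG S p q s ζ ∘ entangler S h)
        = (entangler S h ∘ flipG S p q s ζ ∘ entangler S h) ∘ shiftB S p q s g) ∧
    (∀ σ : S.cells p,
      shiftG S p q s e ∘ (entangler S h ∘ flipR S p q s σ ∘ entangler S h)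
        = (entangler S h ∘ flipR S p q s σ ∘ entangler S h) ∘ shiftG S p q s e) ∧
    (∀ ξ : S.cells q,
      shiftG S p q s e ∘ (entangler S h ∘ flipB S p q s ξ ∘ entangler S h)
        = (entangler S h ∘ flipB S p q s ξ ∘ entangler S h) ∘ shiftG S p q s e) ∧
    (∀ ζ : S.cells s,
      shiftG S p q s e ∘ (entangler S h ∘ flipG S p q s ζ ∘ entangler S h)
        = (entangler S h ∘ flipG S p q s ζ ∘ entangler S h) ∘ shiftG S p q s e) ∧
    (shiftR S p q s f ∘ HSPT S h = HSPT S h ∘ shiftR S p q s f) ∧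
    (shiftB S p q s g ∘ HSPT S h = HSPT S h ∘ shiftB S p q s g) ∧
    (shiftG S p q s e ∘ HSPT S h = HSPT S h ∘ shiftG S p q s e) := by
  simp only [flipR_eq_shiftR, flipB_eq_shiftB, flipG_eq_shiftG, shiftR_eq_translate,
    shiftB_eq_translate, shiftG_eq_translate]
  have hR := commute_translate_entangler (h := h) hf (map_zero _) (map_zero _)
  have hB := commute_translate_entangler (h := h) (map_zero _) hg (map_zero _)
  have hG := commute_translate_entangler (h := h) (map_zero _) (map_zero _) he
  exact ⟨hR.comp_eq, hB.comp_eq, hG.comp_eq,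
    fun _ => (hR.conj_translate _).comp_eq, fun _ => (hR.conj_translate _).comp_eq,
    fun _ => (hR.conj_translate _).comp_eq, fun _ => (hB.conj_translate _).comp_eq,
    fun _ => (hB.conj_translate _).comp_eq, fun _ => (hB.conj_translate _).comp_eq,
    fun _ => (hG.conj_translate _).comp_eq, fun _ => (hG.conj_translate _).comp_eq,
    fun _ => (hG.conj_translate _).comp_eq,
    hR.translate_HSPT.comp_eq, hB.translate_HSPT.comp_eq, hG.translate_HSPT.comp_eq⟩
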